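/- arXiv:1112.0228 — 3 statements merged into one kernel-verified Lean document; each statement's English description precedes it below -/
import Mathlib

section
/- Let G be a semispray on ℝⁿ, let c : I → ℝⁿ be a geodesic of G, let V : I × (−ε,ε)^k → ℝⁿ be a k-parameter geodesic variation of c (k ≥ 2), and fix indices a, b ∈ {1,…,k}. Set j₁(t) = ∂_{s^a}V(t,0,…,0), j₂(t) = ∂_{s^b}V(t,0,…,0) and w(t) = ∂_{s^a}∂_{s^b}V(t,0,…,0). Then for all t ∈ I: w''(t) + 2·D_xG(c(t),c'(t))·w(t) + 2·D_yG(c(t),c'(t))·w'(t) + 2·D²G(c(t),c'(t))[(j₁(t), j₁'(t)), (j₂(t), j₂'(t))] = 0, where D²G(x,y) denotes the second Fréchet derivative of G at (x,y), a symmetric bilinear map (ℝⁿ × ℝⁿ)² → ℝⁿ. -/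
noncomputable section

/-- Euclidean coordinate space `ℝⁿ`. -/
abbrev En (n : ℕ) : Type := Fin n → ℝ

/-- A semispray on `ℝⁿ` in coordinates: a map `G : ℝⁿ × (ℝⁿ ∖ {0}) → ℝⁿ` that is
`C^∞` on the set where the second (velocity) variable is nonzero. -/
def IsSemispray (n : ℕ) (G : En n × En n → En n) : Prop :=
  ContDiffOn ℝ (⊤ : ℕ∞) G {p : En n × En n | p.2 ≠ 0}

/-- A spray: a semispray that is positively `2`-homogeneous in the velocity variable. -/
def IsSpray (n : ℕ) (G : En n × En n → En n) : Prop :=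
  IsSemispray n G ∧
    ∀ (x y : En n), y ≠ 0 → ∀ l : ℝ, 0 < l → G (x, l • y) = l ^ 2 • G (x, y)

/-- `c` is a geodesic of the semispray `G` on the set `I`:
`c` is `C^∞` on `I`, regular, and `c'' + 2 G(c, c') = 0` on `I`. -/
def IsGeodesicOn (n : ℕ) (G : En n × En n → En n) (c : ℝ → En n) (I : Set ℝ) : Prop :=
  ContDiffOn ℝ (⊤ : ℕ∞) c I ∧ (∀ t ∈ I, deriv c t ≠ 0) ∧
    ∀ t ∈ I, deriv (deriv c) t + (2 : ℝ) • G (c t, deriv c t) = 0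

/-- Partial Fréchet derivative of `G` in its first (base) variable. -/
def DxG (n : ℕ) (G : En n × En n → En n) (x y : En n) : En n →L[ℝ] En n :=
  fderiv ℝ (fun x' => G (x', y)) x

/-- Partial Fréchet derivative of `G` in its second (velocity) variable. -/
def DyG (n : ℕ) (G : En n × En n → En n) (x y : En n) : En n →L[ℝ] En n :=
  fderiv ℝ (fun y' => G (x, y')) y

/-- `N(t) = D_yG(c(t), c'(t))` along a curve `c`. -/
def Nc (n : ℕ) (G : En n × En n → En n) (c : ℝ → En n) (t : ℝ) : En n →L[ℝ] En n :=
  DyG n G (c t) (deriv c t)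

/-- Dynamical covariant derivative `∇v = v' + N·v` of a vector field `v` along `c`. -/
def covV (n : ℕ) (G : En n × En n → En n) (c : ℝ → En n) (v : ℝ → En n) (t : ℝ) : En n :=
  deriv v t + Nc n G c t (v t)

/-- Dynamical covariant derivative `∇J = J' + N∘J − J∘N` of an endomorphism field `J`
along `c`. -/
def covE (n : ℕ) (G : En n × En n → En n) (c : ℝ → En n)
    (J : ℝ → En n →L[ℝ] En n) (t : ℝ) : En n →L[ℝ] En n :=
  deriv J t + (Nc n G c t).comp (J t) - (J t).comp (Nc n G c t)

/-- Jacobi endomorphism `Φ = 2 D_xG(c,c') − N' − N∘N` along `c`. -/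
def Phi (n : ℕ) (G : En n × En n → En n) (c : ℝ → En n) (t : ℝ) : En n →L[ℝ] En n :=
  (2 : ℝ) • DxG n G (c t) (deriv c t) - deriv (fun t' => Nc n G c t') t
    - (Nc n G c t).comp (Nc n G c t)

/-- A parallel vector field along `c` on `I`: `∇v = v' + N·v = 0`. -/
def IsParallel (n : ℕ) (G : En n × En n → En n) (c : ℝ → En n) (I : Set ℝ)
    (v : ℝ → En n) : Prop :=
  ContDiffOn ℝ (⊤ : ℕ∞) v I ∧ ∀ t ∈ I, deriv v t + Nc n G c t (v t) = 0

/-- A Jacobi field along a geodesic `c` on `I`: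
`j'' + 2 D_yG(c,c')·j' + 2 D_xG(c,c')·j = 0`. -/
def IsJacobiField (n : ℕ) (G : En n × En n → En n) (c : ℝ → En n) (I : Set ℝ)
    (j : ℝ → En n) : Prop :=
  ContDiffOn ℝ (⊤ : ℕ∞) j I ∧ ∀ t ∈ I,
    deriv (deriv j) t + (2 : ℝ) • DyG n G (c t) (deriv c t) (deriv j t)
      + (2 : ℝ) • DxG n G (c t) (deriv c t) (j t) = 0

/-- A Jacobi tensor along `c` on `I`: a `C^∞` endomorphism field with `∇²J + Φ∘J = 0`. -/
def IsJacobiTensor (n : ℕ) (G : En n × En n → En n) (c : ℝ → En n) (I : Set ℝ)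
    (J : ℝ → En n →L[ℝ] En n) : Prop :=
  ContDiffOn ℝ (⊤ : ℕ∞) J I ∧ ∀ t ∈ I,
    covE n G c (fun t' => covE n G c J t') t + (Phi n G c t).comp (J t) = 0

/-- The open cube `(−ε, ε)^k`. -/
def cube (k : ℕ) (ε : ℝ) : Set (Fin k → ℝ) := {s | ∀ i, |s i| < ε}

/-- A `k`-parameter geodesic variation of the geodesic `c` on `I`:
a `C^∞` map `V : I × (−ε,ε)^k → ℝⁿ` with `V(t,0) = c(t)` and every `t ↦ V(t,s)`
a geodesic of `G` on `I`. -/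
def IsGeodesicVariation (n : ℕ) (G : En n × En n → En n) (c : ℝ → En n) (I : Set ℝ)
    (k : ℕ) (ε : ℝ) (V : ℝ × (Fin k → ℝ) → En n) : Prop :=
  ContDiffOn ℝ (⊤ : ℕ∞) V (I ×ˢ cube k ε) ∧ (∀ t ∈ I, V (t, 0) = c t) ∧
    ∀ s ∈ cube k ε, IsGeodesicOn n G (fun t => V (t, s)) I

/-- `∂_{s^a} V (t, 0)`: the variation vector field in direction `a` along the base curve. -/
def dS (n k : ℕ) (V : ℝ × (Fin k → ℝ) → En n) (a : Fin k) (t : ℝ) : En n :=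
  fderiv ℝ (fun s => V (t, s)) 0 (Pi.single a 1)

/-- `∂_{s^a} ∂_{s^b} V (t, 0)`: the second mixed variation field. -/
def dS2 (n k : ℕ) (V : ℝ × (Fin k → ℝ) → En n) (a b : Fin k) (t : ℝ) : En n :=
  fderiv ℝ (fun s => fderiv ℝ (fun s' => V (t, s')) s (Pi.single b 1)) 0 (Pi.single a 1)

/-! The geodesic equation `∂ₜ²V + 2 G(V, ∂ₜV) = 0` holds on the whole open domain of the
variation, so it may be differentiated in the parameter directions `s^b` and then `s^a`. The
second-order chain rule turns the derivative of `G(V, ∂ₜV)` into the `D G` and `D²G` terms, and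
since `V` is smooth, Schwarz's theorem lets the `∂ₜ` be moved outside the `∂_{s^a} ∂_{s^b}`; at
`s = 0` the result is the stated equation for `w = ∂_{s^a} ∂_{s^b} V`. -/

open Set Filter
open scoped ContDiff Topology

section DirectionalDerivative

variable {E F P : Type*} [NormedAddCommGroup E] [NormedSpace ℝ E]
  [NormedAddCommGroup F] [NormedSpace ℝ F] [NormedAddCommGroup P] [NormedSpace ℝ P]

def dirDeriv (f : E → F) (v : E) (x : E) : F := fderiv ℝ f x v

variable {f g : E → F} {U : Set E}

theorem ContDiffOn.dirDeriv_of_isOpen (hf : ContDiffOn ℝ ∞ f U) (hU : IsOpen U) (v : E) :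
    ContDiffOn ℝ ∞ (dirDeriv f v) U :=
  (hf.fderiv_of_isOpen hU (by simp)).clm_apply contDiffOn_const

theorem ContDiffOn.differentiableAt_of_isOpen (hf : ContDiffOn ℝ ∞ f U) (hU : IsOpen U)
    {x : E} (hx : x ∈ U) : DifferentiableAt ℝ f x :=
  (hf.contDiffAt (hU.mem_nhds hx)).differentiableAt (by simp)

theorem Set.EqOn.dirDeriv_of_isOpen (h : EqOn f g U) (hU : IsOpen U) (v : E) :
    EqOn (dirDeriv f v) (dirDeriv g v) U := fun x hx => by
  simp only [dirDeriv, (h.eventuallyEq_of_mem (hU.mem_nhds hx)).fderiv_eq]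

theorem ContDiffOn.dirDeriv_comm (hf : ContDiffOn ℝ ∞ f U) (hU : IsOpen U) (v w : E) :
    EqOn (dirDeriv (dirDeriv f v) w) (dirDeriv (dirDeriv f w) v) U := fun x hx => by
  have hf' := (hf.fderiv_of_isOpen hU (m := ∞) (by simp)).differentiableAt_of_isOpen hU hx
  have hsymm : IsSymmSndFDerivAt ℝ f x :=
    (hf.contDiffAt (hU.mem_nhds hx)).isSymmSndFDerivAt (by
      rw [minSmoothness_of_isRCLikeNormedField]; exact WithTop.coe_le_coe.2 le_top)
  change fderiv ℝ (fun y => fderiv ℝ f y v) x w = fderiv ℝ (fun y => fderiv ℝ f y w) x v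
  rw [fderiv_clm_apply hf' (differentiableAt_const _),
    fderiv_clm_apply hf' (differentiableAt_const _)]
  simpa using hsymm w v

theorem ContDiffOn.dirDeriv_dirDeriv_comm (hf : ContDiffOn ℝ ∞ f U) (hU : IsOpen U)
    (u v w : E) :
    EqOn (dirDeriv (dirDeriv (dirDeriv f u) v) w) (dirDeriv (dirDeriv (dirDeriv f v) w) u) U :=
  fun x hx => by
  rw [((hf.dirDeriv_comm hU u v).dirDeriv_of_isOpen hU w) hx]
  exact (hf.dirDeriv_of_isOpen hU v).dirDeriv_comm hU u w hx

theorem ContDiffOn.dirDeriv_dirDeriv_comp {G : P → F} {q : E → P} {Ω : Set P}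
    (hG : ContDiffOn ℝ ∞ G Ω) (hΩ : IsOpen Ω) (hq : ContDiffOn ℝ ∞ q U) (hU : IsOpen U)
    (hqΩ : MapsTo q U Ω) (v w : E) {x : E} (hx : x ∈ U) :
    dirDeriv (dirDeriv (G ∘ q) w) v x =
      fderiv ℝ G (q x) (dirDeriv (dirDeriv q w) v x)
        + fderiv ℝ (fderiv ℝ G) (q x) (dirDeriv q v x) (dirDeriv q w x) := by
  have hG' := hG.fderiv_of_isOpen hΩ (m := ∞) (by simp)
  have hchain : EqOn (dirDeriv (G ∘ q) w) (fun y => fderiv ℝ G (q y) (dirDeriv q w y)) U :=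
    fun y hy => by
      simp only [dirDeriv, fderiv_comp y (hG.differentiableAt_of_isOpen hΩ (hqΩ hy))
        (hq.differentiableAt_of_isOpen hU hy), ContinuousLinearMap.comp_apply]
  have hG'q : DifferentiableAt ℝ (fun y => fderiv ℝ G (q y)) x :=
    (hG'.differentiableAt_of_isOpen hΩ (hqΩ hx)).comp x (hq.differentiableAt_of_isOpen hU hx)
  rw [hchain.dirDeriv_of_isOpen hU v hx, dirDeriv, fderiv_clm_apply hG'q
    ((hq.dirDeriv_of_isOpen hU w).differentiableAt_of_isOpen hU hx),
    fderiv_fun_comp x (hG'.differentiableAt_of_isOpen hΩ (hqΩ hx))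
      (hq.differentiableAt_of_isOpen hU hx)]
  simp [dirDeriv]

theorem dirDeriv_const_smul (c : ℝ) (f : E → F) (v : E) :
    dirDeriv (fun y => c • f y) v = fun y => c • dirDeriv f v y := by
  ext x : 1
  exact congrArg (· v) (congrFun (fderiv_const_smul_field (𝕜 := ℝ) (f := f) c) x)

theorem dirDeriv_neg (f : E → F) (v : E) :
    dirDeriv (fun y => -f y) v = fun y => -dirDeriv f v y := by
  ext x : 1
  simp [dirDeriv, fderiv_fun_neg]

theorem dirDeriv_prodMk {f : E → F} {g : E → P} {x : E} (hf : DifferentiableAt ℝ f x)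
    (hg : DifferentiableAt ℝ g x) (v : E) :
    dirDeriv (fun y => (f y, g y)) v x = (dirDeriv f v x, dirDeriv g v x) := by
  simp [dirDeriv, hf.fderiv_prodMk hg]

theorem ContDiffOn.second_variation_of_geodesic {V : E → P} {G : P × P → P} {Ω : Set (P × P)}
    (hV : ContDiffOn ℝ ∞ V U) (hU : IsOpen U) (hG : ContDiffOn ℝ ∞ G Ω) (hΩ : IsOpen Ω)
    {e : E} (hΩU : ∀ y ∈ U, (V y, dirDeriv V e y) ∈ Ω)
    (hgeod : ∀ y ∈ U, dirDeriv (dirDeriv V e) e y + (2 : ℝ) • G (V y, dirDeriv V e y) = 0)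
    (v w : E) {x : E} (hx : x ∈ U) :
    dirDeriv (dirDeriv (dirDeriv (dirDeriv V w) v) e) e x
      + (2 : ℝ) • fderiv ℝ G (V x, dirDeriv V e x)
          (dirDeriv (dirDeriv V w) v x, dirDeriv (dirDeriv (dirDeriv V w) v) e x)
      + (2 : ℝ) • fderiv ℝ (fderiv ℝ G) (V x, dirDeriv V e x)
          (dirDeriv V v x, dirDeriv (dirDeriv V v) e x)
          (dirDeriv V w x, dirDeriv (dirDeriv V w) e x) = 0 := by
  set q : E → P × P := fun y => (V y, dirDeriv V e y)
  have hVe := hV.dirDeriv_of_isOpen hU e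
  have hq1 (u : E) : ∀ y ∈ U,
      dirDeriv q u y = (dirDeriv V u y, dirDeriv (dirDeriv V e) u y) := fun y hy =>
    dirDeriv_prodMk (hV.differentiableAt_of_isOpen hU hy) (hVe.differentiableAt_of_isOpen hU hy) u
  have hq2 : dirDeriv (dirDeriv q w) v x =
      (dirDeriv (dirDeriv V w) v x, dirDeriv (dirDeriv (dirDeriv V e) w) v x) := by
    rw [Set.EqOn.dirDeriv_of_isOpen (hq1 w) hU v hx]
    exact dirDeriv_prodMk ((hV.dirDeriv_of_isOpen hU w).differentiableAt_of_isOpen hU hx)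
      ((hVe.dirDeriv_of_isOpen hU w).differentiableAt_of_isOpen hU hx) v
  have hchain := hG.dirDeriv_dirDeriv_comp (q := q) hΩ (hV.prodMk hVe) hU hΩU v w hx
  have hGq : EqOn (fun y => (2 : ℝ) • (G ∘ q) y) (fun y => -dirDeriv (dirDeriv V e) e y) U :=
    fun y hy => eq_neg_of_add_eq_zero_right (hgeod y hy)
  have hdiff := ((hGq.dirDeriv_of_isOpen hU w).dirDeriv_of_isOpen hU v) hx
  simp only [dirDeriv_const_smul, dirDeriv_neg] at hdiff
  have hcomm : dirDeriv (dirDeriv (dirDeriv (dirDeriv V e) e) w) v x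
      = dirDeriv (dirDeriv (dirDeriv (dirDeriv V w) v) e) e x := by
    rw [hVe.dirDeriv_dirDeriv_comm hU e w v hx]
    exact (hV.dirDeriv_dirDeriv_comm hU e w v).dirDeriv_of_isOpen hU e hx
  rw [hchain, hq2, hq1 v x hx, hq1 w x hx, hcomm, hV.dirDeriv_comm hU e v hx,
    hV.dirDeriv_comm hU e w hx, hV.dirDeriv_dirDeriv_comm hU e w v hx] at hdiff
  rw [add_assoc, ← smul_add, hdiff, add_neg_cancel]

end DirectionalDerivative

section Slice

variable {S F : Type*} [NormedAddCommGroup S] [NormedSpace ℝ S]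
  [NormedAddCommGroup F] [NormedSpace ℝ F] {h : ℝ × S → F}

theorem hasDerivAt_slice {t : ℝ} {s : S} (hh : DifferentiableAt ℝ h (t, s)) :
    HasDerivAt (fun t' => h (t', s)) (dirDeriv h (1, 0) (t, s)) t := by
  simpa [Function.comp_def, dirDeriv] using
    hh.hasFDerivAt.comp_hasDerivAt t ((hasDerivAt_id t).prodMk (hasDerivAt_const t s))

theorem fderiv_slice_apply {t : ℝ} {s : S} (hh : DifferentiableAt ℝ h (t, s)) (v : S) :
    fderiv ℝ (fun s' => h (t, s')) s v = dirDeriv h (0, v) (t, s) := by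
  rw [fderiv_fun_comp s hh (hasFDerivAt_prodMk_right t s).differentiableAt,
    (hasFDerivAt_prodMk_right t s).fderiv]
  rfl

theorem eqOn_deriv_slice {U : Set (ℝ × S)} {I : Set ℝ} {s : S} {f : ℝ → F}
    (hh : DifferentiableOn ℝ h U) (hU : IsOpen U) (hI : IsOpen I) (hIU : ∀ t ∈ I, (t, s) ∈ U)
    (hf : EqOn f (fun t => h (t, s)) I) :
    EqOn (deriv f) (fun t => dirDeriv h (1, 0) (t, s)) I := fun t ht => by
  rw [(hf.eventuallyEq_of_mem (hI.mem_nhds ht)).deriv_eq]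
  exact (hasDerivAt_slice (hh.differentiableAt (hU.mem_nhds (hIU t ht)))).deriv

end Slice

theorem isOpen_cube (k : ℕ) (ε : ℝ) : IsOpen (cube k ε) := by
  have : cube k ε = univ.pi fun _ => Ioo (-ε) ε := by
    ext s
    simp [cube, abs_lt]
  rw [this]
  exact isOpen_set_pi finite_univ fun _ _ => isOpen_Ioo

theorem zero_mem_cube (k : ℕ) {ε : ℝ} (hε : 0 < ε) : (0 : Fin k → ℝ) ∈ cube k ε :=
  fun _ => by simpa using hε

theorem fderiv_apply_eq_DxG_add_DyG {n : ℕ} {G : En n × En n → En n} {x y : En n}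
    (hG : DifferentiableAt ℝ G (x, y)) (u v : En n) :
    fderiv ℝ G (x, y) (u, v) = DxG n G x y u + DyG n G x y v := by
  rw [DxG, DyG, fderiv_fun_comp x hG (hasFDerivAt_prodMk_left x y).differentiableAt,
    fderiv_fun_comp y hG (hasFDerivAt_prodMk_right x y).differentiableAt,
    (hasFDerivAt_prodMk_left x y).fderiv, (hasFDerivAt_prodMk_right x y).fderiv]
  simp [← map_add]

theorem IsGeodesicVariation.dirDeriv_geodesic_equation {n k : ℕ} {G : En n × En n → En n}
    {c : ℝ → En n} {I : Set ℝ} {ε : ℝ} {V : ℝ × (Fin k → ℝ) → En n}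
    (hV : IsGeodesicVariation n G c I k ε V) (hI : IsOpen I) :
    ∀ y ∈ I ×ˢ cube k ε, dirDeriv V (1, 0) y ≠ 0 ∧
      dirDeriv (dirDeriv V (1, 0)) (1, 0) y + (2 : ℝ) • G (V y, dirDeriv V (1, 0) y) = 0 := by
  rintro ⟨t, s⟩ ⟨ht, hs⟩
  obtain ⟨-, hreg, heq⟩ := hV.2.2 s hs
  have hU := hI.prod (isOpen_cube k ε)
  have hIU : ∀ t ∈ I, (t, s) ∈ I ×ˢ cube k ε := fun t ht => ⟨ht, hs⟩
  have h1 := eqOn_deriv_slice (hV.1.differentiableOn (by simp)) hU hI hIU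
    (f := fun u => V (u, s)) fun _ _ => rfl
  have h2 := eqOn_deriv_slice ((hV.1.dirDeriv_of_isOpen hU (1, 0)).differentiableOn (by simp))
    hU hI hIU h1
  have h1t : deriv (fun u => V (u, s)) t = dirDeriv V (1, 0) (t, s) := h1 ht
  have h2t : deriv (deriv fun u => V (u, s)) t = dirDeriv (dirDeriv V (1, 0)) (1, 0) (t, s) :=
    h2 ht
  have heqt := heq t ht
  rw [h1t, h2t] at heqt
  exact ⟨h1t ▸ hreg t ht, heqt⟩

theorem dS_eq_dirDeriv {n k : ℕ} {V : ℝ × (Fin k → ℝ) → En n} {t : ℝ}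
    (hV : DifferentiableAt ℝ V (t, 0)) (a : Fin k) :
    dS n k V a t = dirDeriv V (0, Pi.single a 1) (t, 0) :=
  fderiv_slice_apply hV _

theorem dS2_eq_dirDeriv {n k : ℕ} {V : ℝ × (Fin k → ℝ) → En n} {U : Set (ℝ × (Fin k → ℝ))}
    (hV : ContDiffOn ℝ ∞ V U) (hU : IsOpen U) {t : ℝ} (ht : (t, 0) ∈ U) (a b : Fin k) :
    dS2 n k V a b t = dirDeriv (dirDeriv V (0, Pi.single b 1)) (0, Pi.single a 1) (t, 0) := by
  have hnear : ∀ᶠ s in 𝓝 0, (t, s) ∈ U :=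
    (hU.preimage (Continuous.prodMk_right t)).mem_nhds ht
  have hinner : (fun s => fderiv ℝ (fun s' => V (t, s')) s (Pi.single b 1))
      =ᶠ[𝓝 0] fun s => dirDeriv V (0, Pi.single b 1) (t, s) :=
    hnear.mono fun s hs => fderiv_slice_apply (hV.differentiableAt_of_isOpen hU hs) _
  rw [dS2, hinner.fderiv_eq]
  exact fderiv_slice_apply ((hV.dirDeriv_of_isOpen hU _).differentiableAt_of_isOpen hU ht) _

theorem second_variation_field_equation_general (n k : ℕ)
    (G : En n × En n → En n) (hG : IsSemispray n G)
    (I : Set ℝ) (hIopen : IsOpen I)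
    (c : ℝ → En n)
    (ε : ℝ) (hε : 0 < ε) (V : ℝ × (Fin k → ℝ) → En n)
    (hV : IsGeodesicVariation n G c I k ε V) (a b : Fin k) :
    ∀ t ∈ I,
      deriv (deriv (dS2 n k V a b)) t
        + (2 : ℝ) • DxG n G (c t) (deriv c t) (dS2 n k V a b t)
        + (2 : ℝ) • DyG n G (c t) (deriv c t) (deriv (dS2 n k V a b) t)
        + (2 : ℝ) • fderiv ℝ (fun p => fderiv ℝ G p) (c t, deriv c t)
            (dS n k V a t, deriv (dS n k V a) t)
            (dS n k V b t, deriv (dS n k V b) t) = 0 := by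
  intro t ht
  have hU : IsOpen (I ×ˢ cube k ε) := hIopen.prod (isOpen_cube k ε)
  have hIU : ∀ t ∈ I, (t, (0 : Fin k → ℝ)) ∈ I ×ˢ cube k ε :=
    fun t ht => ⟨ht, zero_mem_cube k hε⟩
  have hgeod := hV.dirDeriv_geodesic_equation hIopen
  obtain ⟨hVsmooth, hVc, -⟩ := hV
  have hD {h : ℝ × (Fin k → ℝ) → En n} (hh : ContDiffOn ℝ ∞ h (I ×ˢ cube k ε)) (v) :
      ContDiffOn ℝ ∞ (dirDeriv h v) (I ×ˢ cube k ε) :=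
    hh.dirDeriv_of_isOpen hU v
  have hslice {h : ℝ × (Fin k → ℝ) → En n} (hh : ContDiffOn ℝ ∞ h (I ×ˢ cube k ε))
      {f : ℝ → En n} (hf : EqOn f (fun t => h (t, 0)) I) :
      EqOn (deriv f) (fun t => dirDeriv h (1, 0) (t, 0)) I :=
    eqOn_deriv_slice (hh.differentiableOn (by simp)) hU hIopen hIU hf
  have hc : EqOn c (fun t => V (t, 0)) I := fun t ht => (hVc t ht).symm
  have hj (i : Fin k) : EqOn (dS n k V i) (fun t => dirDeriv V (0, Pi.single i 1) (t, 0)) I :=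
    fun t ht => dS_eq_dirDeriv (hVsmooth.differentiableAt_of_isOpen hU (hIU t ht)) i
  have hw : EqOn (dS2 n k V a b)
      (fun t => dirDeriv (dirDeriv V (0, Pi.single b 1)) (0, Pi.single a 1) (t, 0)) I :=
    fun t ht => dS2_eq_dirDeriv hVsmooth hU (hIU t ht) a b
  have hw' := hslice (hD (hD hVsmooth _) _) hw
  rw [hc ht, hslice hVsmooth hc ht, hj a ht, hj b ht, hslice (hD hVsmooth _) (hj a) ht,
    hslice (hD hVsmooth _) (hj b) ht, hw ht, hw' ht, hslice (hD (hD (hD hVsmooth _) _) _) hw' ht]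
  have hΩ : IsOpen {p : En n × En n | p.2 ≠ 0} := isOpen_ne_fun continuous_snd continuous_const
  have key := hVsmooth.second_variation_of_geodesic hU hG hΩ (fun y hy => (hgeod y hy).1)
    (fun y hy => (hgeod y hy).2) (0, Pi.single a 1) (0, Pi.single b 1) (hIU t ht)
  rw [fderiv_apply_eq_DxG_add_DyG (hG.differentiableAt_of_isOpen hΩ
    (x := (V (t, 0), dirDeriv V (1, 0) (t, 0))) (hgeod _ (hIU t ht)).1), smul_add,
    ← add_assoc] at key
  exact key

/-- The second mixed variation field `w = ∂_{s^a}∂_{s^b}V(t,0,…,0)` of a `k`-parameter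
geodesic variation satisfies the geodesic equation of the second iterated complete lift:
`w'' + 2 D_xG(c,c')·w + 2 D_yG(c,c')·w' + 2 D²G(c,c')[(j₁,j₁'),(j₂,j₂')] = 0`,
where `j₁ = ∂_{s^a}V(·,0)` and `j₂ = ∂_{s^b}V(·,0)`. -/
theorem second_variation_field_equation (n k : ℕ) (hn : 1 ≤ n) (hk : 2 ≤ k)
    (G : En n × En n → En n) (hG : IsSemispray n G)
    (I : Set ℝ) (hIopen : IsOpen I) (hIconn : I.OrdConnected)
    (c : ℝ → En n) (hc : IsGeodesicOn n G c I)
    (ε : ℝ) (hε : 0 < ε) (V : ℝ × (Fin k → ℝ) → En n)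
    (hV : IsGeodesicVariation n G c I k ε V) (a b : Fin k) :
    ∀ t ∈ I,
      deriv (deriv (dS2 n k V a b)) t
        + (2 : ℝ) • DxG n G (c t) (deriv c t) (dS2 n k V a b t)
        + (2 : ℝ) • DyG n G (c t) (deriv c t) (deriv (dS2 n k V a b) t)
        + (2 : ℝ) • fderiv ℝ (fun p => fderiv ℝ G p) (c t, deriv c t)
            (dS n k V a t, deriv (dS n k V a) t)
            (dS n k V b t, deriv (dS n k V b) t) = 0 :=
  second_variation_field_equation_general n k G hG I hIopen c ε hε V hV a b
end
end

section
/- Let n ≥ 2, let G be a spray on ℝⁿ, let c : I → ℝⁿ be a geodesic of G with 0 ∈ I, and let e₁,…,e_{n−1} be parallel vector fields along c such that {c'(t), e₁(t),…,e_{n−1}(t)} is a basis of ℝⁿ for every t ∈ I; set W_t = span{e₁(t),…,e_{n−1}(t)}. Let J be a Jacobi tensor along c and assume: (1) Φ is transversal with respect to (W_t), i.e. Φ(t)·c'(t) = 0 and range Φ(t) ⊆ W_t for all t ∈ I; and (2) J(0)·c'(0) = 0, (∇J)(0)·c'(0) = 0, range J(0) ⊆ W₀ and range (∇J)(0) ⊆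 W₀. Then J is transversal with respect to (W_t): J(t)·c'(t) = 0 and range J(t) ⊆ W_t for all t ∈ I. -/
noncomputable section

/-- The span `W_t` of a transversal frame `e₁(t), …, e_m(t)` along `c`. -/
def Wspan (n m : ℕ) (e : Fin m → ℝ → En n) (t : ℝ) : Submodule ℝ (En n) :=
  Submodule.span ℝ (Set.range fun a => e a t)

/-- A family `e₁, …, e_m` of parallel vector fields along `c` on `I` such that
`{c'(t), e₁(t), …, e_m(t)}` is a basis of `ℝⁿ` for every `t ∈ I`. -/
def IsParallelFrame (n m : ℕ) (G : En n × En n → En n) (c : ℝ → En n) (I : Set ℝ)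
    (e : Fin m → ℝ → En n) : Prop :=
  (∀ a, IsParallel n G c I (e a)) ∧
    ∀ t ∈ I,
      LinearIndependent ℝ (fun i : Option (Fin m) => i.elim (deriv c t) fun a => e a t) ∧
      Submodule.span ℝ
        (Set.range fun i : Option (Fin m) => i.elim (deriv c t) fun a => e a t) = ⊤

/-!
Along a geodesic of a spray the velocity is parallel (Euler's relation `N c' = 2 G (c, c')` turns
the geodesic equation into `c'' + N c' = 0`), so `c', e₁, …, e_{n-1}` form a parallel frame `B`,
and conjugating by it turns the dynamical covariant derivative into the ordinary one:
`(B⁻¹ T B)' = B⁻¹ (∇T) B`. In the frame, `T` maps into `W` iff the `c'`-row of `B⁻¹ T B`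
vanishes; so if `∇T` maps into `W`, that row is constant, and `T` maps into `W` as soon as `T(0)`
does. Since `∇²J = -Φ J` and `Φ` maps into `W`, this applies first to `T = ∇J` and then to `T = J`.
Independently, `u = J c'` and `w = (∇J) c'` solve the linear system `∇u = w`, `∇w = -Φ u` with
zero initial data, so `J c' = 0` by uniqueness of solutions of linear ODEs.
-/

open Set ContinuousLinearMap

section Calculus

variable {E F : Type*} [NormedAddCommGroup E] [NormedSpace ℝ E]
  [NormedAddCommGroup F] [NormedSpace ℝ F]

theorem Set.OrdConnected.eq_zero_of_hasDerivAt_clm_apply {I : Set ℝ} (hI : I.OrdConnected)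
    {A : ℝ → E →L[ℝ] E} (hA : ContinuousOn A I) {f : ℝ → E}
    (hf : ∀ t ∈ I, HasDerivAt f (A t (f t)) t) {t₀ : ℝ} (ht₀ : t₀ ∈ I) (hf₀ : f t₀ = 0) :
    ∀ t ∈ I, f t = 0 := by
  intro t ht
  have hsub : uIcc t₀ t ⊆ I := hI.uIcc_subset ht₀ ht
  obtain ⟨C, hC⟩ := isCompact_uIcc.exists_bound_of_continuousOn (hA.mono hsub)
  have hlip : ∀ s ∈ uIcc t₀ t, LipschitzOnWith C.toNNReal (A s) univ := fun s hs =>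
    ((A s).lipschitz.weaken (by simpa [← norm_toNNReal] using Real.toNNReal_mono (hC s hs)))
      |>.lipschitzOnWith
  have hzero : ∀ s, HasDerivAt (fun _ : ℝ => (0 : E)) (A s 0) s := fun s => by
    simpa using hasDerivAt_const s (0 : E)
  rcases le_total t₀ t with hle | hle
  · rw [uIcc_of_le hle] at hsub hlip
    refine ODE_solution_unique_of_mem_Icc_right (s := fun _ => univ) (g := fun _ => 0)
      (fun s hs => hlip s (Ico_subset_Icc_self hs))
      (fun s hs => (hf s (hsub hs)).continuousAt.continuousWithinAt)
      (fun s hs => (hf s (hsub (Ico_subset_Icc_self hs))).hasDerivWithinAt)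
      (fun _ _ => mem_univ _) continuousOn_const (fun s _ => (hzero s).hasDerivWithinAt)
      (fun _ _ => mem_univ _) hf₀ ⟨hle, le_rfl⟩
  · rw [uIcc_of_ge hle] at hsub hlip
    refine ODE_solution_unique_of_mem_Icc_left (s := fun _ => univ) (g := fun _ => 0)
      (fun s hs => hlip s (Ioc_subset_Icc_self hs))
      (fun s hs => (hf s (hsub hs)).continuousAt.continuousWithinAt)
      (fun s hs => (hf s (hsub (Ioc_subset_Icc_self hs))).hasDerivWithinAt)
      (fun _ _ => mem_univ _) continuousOn_const (fun s _ => (hzero s).hasDerivWithinAt)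
      (fun _ _ => mem_univ _) hf₀ ⟨le_rfl, hle⟩

theorem HasDerivAt.inverse_clm [CompleteSpace E] {B : ℝ → E →L[ℝ] F} {B' : E →L[ℝ] F} {t : ℝ}
    (hB : HasDerivAt B B' t) (hBt : (B t).IsInvertible) :
    HasDerivAt (fun s => (B s).inverse) (-((B t).inverse ∘L B' ∘L (B t).inverse)) t := by
  obtain ⟨e, he⟩ := hBt
  -- reduce to `Ring.inverse` on `E →L[ℝ] E`: `f.inverse = (e⁻¹ ∘ f)⁻¹ʳ ∘ e⁻¹`, and `e⁻¹ ∘ B t = 1`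
  have hone : (e.symm : F →L[ℝ] E) ∘L B t = ((1 : (E →L[ℝ] E)ˣ) : E →L[ℝ] E) := by
    ext x; simp [← he]
  have hring := hasFDerivAt_ringInverse (𝕜 := ℝ) (1 : (E →L[ℝ] E)ˣ)
  rw [← hone] at hring
  have hcomp : HasDerivAt (fun s => (e.symm : F →L[ℝ] E) ∘L B s)
      ((e.symm : F →L[ℝ] E) ∘L B') t := by
    simpa using (hasDerivAt_const t (e.symm : F →L[ℝ] E)).clm_comp hB
  have h1 := hring.comp_hasDerivAt t hcomp
  have h := h1.clm_comp (hasDerivAt_const t (e.symm : F →L[ℝ] E))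
  have hfun : (fun s => (B s).inverse) =
      fun s => Ring.inverse ((e.symm : F →L[ℝ] E) ∘L B s) ∘L (e.symm : F →L[ℝ] E) :=
    funext fun s => inverse_eq_ringInverse e (B s)
  rw [hfun, ← he, inverse_equiv]
  convert h using 1
  · simp only [Function.comp_def]
  · ext x
    simp

theorem Set.OrdConnected.eq_zero_of_hasDerivAt_jacobi_system {I : Set ℝ}
    (hI : I.OrdConnected) {N Φ : ℝ → E →L[ℝ] E} (hN : ContinuousOn N I) (hΦ : ContinuousOn Φ I)
    {u w : ℝ → E} (hu : ∀ t ∈ I, HasDerivAt u (w t - N t (u t)) t)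
    (hw : ∀ t ∈ I, HasDerivAt w (-Φ t (u t) - N t (w t)) t) {t₀ : ℝ} (ht₀ : t₀ ∈ I)
    (hu₀ : u t₀ = 0) (hw₀ : w t₀ = 0) : ∀ t ∈ I, u t = 0 := by
  let A : ℝ → (E × E) →L[ℝ] E × E := fun t =>
    (snd ℝ E E - N t ∘L fst ℝ E E).prod (-(Φ t ∘L fst ℝ E E) - N t ∘L snd ℝ E E)
  have hA : ContinuousOn A I :=
    (prodₗᵢ ℝ).continuous.comp_continuousOn (ContinuousOn.prodMk (by fun_prop) (by fun_prop))
  have h := hI.eq_zero_of_hasDerivAt_clm_apply hA (f := fun t => (u t, w t))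
    (fun t ht => (hu t ht).prodMk (hw t ht)) ht₀ (by simp [hu₀, hw₀])
  exact fun t ht => congrArg Prod.fst (h t ht)

@[simp]
theorem ContinuousLinearEquiv.piRing_symm_apply {ι : Type*} [Fintype ι] [DecidableEq ι]
    (f : ι → E) (x : ι → ℝ) :
    (ContinuousLinearEquiv.piRing (𝕜 := ℝ) ι).symm f x = ∑ i, x i • f i :=
  LinearEquiv.piRing_symm_apply (S := ℝ) f x

end Calculus

open scoped ContDiff

section Spray

variable {n : ℕ} {G : En n × En n → En n}

theorem IsSemispray.hasFDerivAt (hG : IsSemispray n G) {x y : En n} (hy : y ≠ 0) :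
    HasFDerivAt G (fderiv ℝ G (x, y)) (x, y) :=
  ((hG.contDiffAt ((isOpen_compl_singleton.preimage continuous_snd).mem_nhds hy)).differentiableAt
    (by simp)).hasFDerivAt

theorem IsSemispray.DxG_eq (hG : IsSemispray n G) {x y : En n} (hy : y ≠ 0) :
    DxG n G x y = fderiv ℝ G (x, y) ∘L inl ℝ (En n) (En n) :=
  ((hG.hasFDerivAt hy).comp x (hasFDerivAt_prodMk_left x y)).fderiv

theorem IsSemispray.DyG_eq (hG : IsSemispray n G) {x y : En n} (hy : y ≠ 0) :
    DyG n G x y = fderiv ℝ G (x, y) ∘L inr ℝ (En n) (En n) :=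
  ((hG.hasFDerivAt hy).comp y (hasFDerivAt_prodMk_right x y)).fderiv

theorem IsSpray.DyG_apply_self (hG : IsSpray n G) {x y : En n} (hy : y ≠ 0) :
    DyG n G x y y = (2 : ℝ) • G (x, y) := by
  have hline : HasDerivAt (fun l : ℝ => l • y) y 1 := by
    simpa using (hasDerivAt_id (1 : ℝ)).smul_const y
  have hG' : HasFDerivAt (fun y' => G (x, y')) (DyG n G x y) ((1 : ℝ) • y) := by
    rw [one_smul, hG.1.DyG_eq hy]
    exact (hG.1.hasFDerivAt hy).comp y (hasFDerivAt_prodMk_right x y)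
  have hhom : (fun l : ℝ => l ^ 2 • G (x, y)) =ᶠ[nhds 1] fun l => G (x, l • y) := by
    filter_upwards [eventually_gt_nhds zero_lt_one] with l hl
    exact (hG.2 x y hy l hl).symm
  have hpow : HasDerivAt (fun l : ℝ => l ^ 2 • G (x, y)) ((2 : ℝ) • G (x, y)) 1 := by
    simpa using (hasDerivAt_pow 2 (1 : ℝ)).smul_const (G (x, y))
  have hcomp : HasDerivAt (fun l : ℝ => G (x, l • y)) (DyG n G x y y) 1 :=
    hG'.comp_hasDerivAt (f := fun l : ℝ => l • y) 1 hline
  exact hcomp.unique (hpow.congr_of_eventuallyEq hhom.symm)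

variable {c : ℝ → En n} {I : Set ℝ}

theorem IsGeodesicOn.contDiffOn_fderiv (hG : IsSemispray n G) (hc : IsGeodesicOn n G c I)
    (hI : IsOpen I) : ContDiffOn ℝ ∞ (fun t => fderiv ℝ G (c t, deriv c t)) I :=
  (hG.fderiv_of_isOpen (isOpen_compl_singleton.preimage continuous_snd) le_rfl).comp
    (hc.1.prodMk (hc.1.deriv_of_isOpen hI le_rfl)) fun t ht => hc.2.1 t ht

theorem IsGeodesicOn.contDiffOn_Nc (hG : IsSemispray n G) (hc : IsGeodesicOn n G c I)
    (hI : IsOpen I) : ContDiffOn ℝ ∞ (Nc n G c) I :=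
  ((hc.contDiffOn_fderiv hG hI).clm_comp contDiffOn_const).congr
    fun t ht => hG.DyG_eq (hc.2.1 t ht)

theorem IsGeodesicOn.continuousOn_Phi (hG : IsSemispray n G) (hc : IsGeodesicOn n G c I)
    (hI : IsOpen I) : ContinuousOn (Phi n G c) I := by
  have hDx : ContinuousOn (fun t => DxG n G (c t) (deriv c t)) I :=
    ((hc.contDiffOn_fderiv hG hI).clm_comp contDiffOn_const).continuousOn.congr
      fun t ht => hG.DxG_eq (hc.2.1 t ht)
  have hN := hc.contDiffOn_Nc hG hI
  exact ((hDx.const_smul (2 : ℝ)).sub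
    (hN.deriv_of_isOpen (m := ∞) hI le_rfl).continuousOn).sub
    (hN.continuousOn.clm_comp hN.continuousOn)

theorem IsGeodesicOn.isParallel_deriv (hG : IsSpray n G) (hc : IsGeodesicOn n G c I)
    (hI : IsOpen I) : IsParallel n G c I (deriv c) :=
  ⟨hc.1.deriv_of_isOpen hI le_rfl, fun t ht => by
    rw [Nc, hG.DyG_apply_self (hc.2.1 t ht)]
    exact hc.2.2 t ht⟩

end Spray

section Frame

variable {n m : ℕ}

def frameVec (c : ℝ → En n) (e : Fin m → ℝ → En n) (t : ℝ) (i : Option (Fin m)) : En n :=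
  i.elim (deriv c t) fun a => e a t

def frameMap (c : ℝ → En n) (e : Fin m → ℝ → En n) (t : ℝ) :
    (Option (Fin m) → ℝ) →L[ℝ] En n :=
  (ContinuousLinearEquiv.piRing (𝕜 := ℝ) (Option (Fin m))).symm (frameVec c e t)

variable {G : En n × En n → En n} {c : ℝ → En n} {I : Set ℝ} {e : Fin m → ℝ → En n} {t : ℝ}

theorem frameMap_apply (x : Option (Fin m) → ℝ) :
    frameMap c e t x = ∑ i, x i • frameVec c e t i :=
  ContinuousLinearEquiv.piRing_symm_apply _ x

theorem IsParallel.hasDerivAt {v : ℝ → En n} (hv : IsParallel n G c I v) (hI : IsOpen I)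
    (ht : t ∈ I) : HasDerivAt v (-Nc n G c t (v t)) t := by
  rw [← eq_neg_of_add_eq_zero_left (hv.2 t ht)]
  exact ((hv.1.contDiffAt (hI.mem_nhds ht)).differentiableAt (by simp)).hasDerivAt

theorem IsParallelFrame.hasDerivAt_frameMap (hG : IsSpray n G) (hc : IsGeodesicOn n G c I)
    (hI : IsOpen I) (he : IsParallelFrame n m G c I e) (ht : t ∈ I) :
    HasDerivAt (frameMap c e) (-(Nc n G c t ∘L frameMap c e t)) t := by
  have hvec : HasDerivAt (frameVec c e) (fun i => -Nc n G c t (frameVec c e t i)) t := by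
    refine hasDerivAt_pi.2 fun i => ?_
    cases i with
    | none => exact (hc.isParallel_deriv hG hI).hasDerivAt hI ht
    | some a => exact (he.1 a).hasDerivAt hI ht
  have h : HasDerivAt (frameMap c e) ((ContinuousLinearEquiv.piRing (𝕜 := ℝ)
      (Option (Fin m))).symm fun i => -Nc n G c t (frameVec c e t i)) t :=
    (ContinuousLinearEquiv.piRing (𝕜 := ℝ) (E := En n)
      (Option (Fin m))).symm.hasFDerivAt.comp_hasDerivAt t hvec
  convert h using 1
  ext x
  simp [frameMap_apply]

theorem frameMap_eq_basis (hli : LinearIndependent ℝ (frameVec c e t))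
    (hsp : Submodule.span ℝ (range (frameVec c e t)) = ⊤) :
    frameMap c e t = ((Module.Basis.mk hli hsp.ge).equivFun.symm.toContinuousLinearEquiv :
      (Option (Fin m) → ℝ) →L[ℝ] En n) := by
  ext x : 1
  simp [frameMap_apply, Module.Basis.equivFun_symm_apply]

theorem isInvertible_frameMap (hli : LinearIndependent ℝ (frameVec c e t))
    (hsp : Submodule.span ℝ (range (frameVec c e t)) = ⊤) : (frameMap c e t).IsInvertible :=
  ⟨_, (frameMap_eq_basis hli hsp).symm⟩

theorem mem_Wspan_iff (hli : LinearIndependent ℝ (frameVec c e t))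
    (hsp : Submodule.span ℝ (range (frameVec c e t)) = ⊤) {x : En n} :
    x ∈ Wspan n m e t ↔ (frameMap c e t).inverse x none = 0 := by
  set b := Module.Basis.mk hli hsp.ge
  have hW : range (fun a => e a t) = b '' range some := by
    rw [← range_comp, Module.Basis.coe_mk]; rfl
  have hinv : (frameMap c e t).inverse x = b.repr x := by
    rw [frameMap_eq_basis hli hsp, inverse_equiv]; rfl
  rw [Wspan, hW, Module.Basis.mem_span_image, hinv, Finsupp.support_subset_iff]
  refine ⟨fun h => h none (by simp), fun h a ha => ?_⟩
  cases a with
  | none => exact h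
  | some a => exact absurd (mem_range_self a) ha

end Frame

section Covariant

variable {n : ℕ} {G : En n × En n → En n} {c : ℝ → En n} {I : Set ℝ}

theorem contDiffOn_covE {T : ℝ → En n →L[ℝ] En n} (hN : ContDiffOn ℝ ∞ (Nc n G c) I)
    (hT : ContDiffOn ℝ ∞ T I) (hI : IsOpen I) : ContDiffOn ℝ ∞ (covE n G c T) I :=
  ((hT.deriv_of_isOpen (m := ∞) hI le_rfl).add (hN.clm_comp hT)).sub (hT.clm_comp hN)

theorem hasDerivAt_apply_of_parallel {T : ℝ → En n →L[ℝ] En n} {v : ℝ → En n} {t : ℝ}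
    (hT : DifferentiableAt ℝ T t) (hv : HasDerivAt v (-Nc n G c t (v t)) t) :
    HasDerivAt (fun s => T s (v s)) (covE n G c T t (v t) - Nc n G c t (T t (v t))) t :=
  (hT.hasDerivAt.clm_apply hv).congr_deriv <| by
    simp only [covE, map_neg, add_apply, sub_apply, comp_apply]
    abel

theorem hasDerivAt_inverse_comp_comp {F : Type*} [NormedAddCommGroup F] [NormedSpace ℝ F]
    [CompleteSpace F] {B : ℝ → F →L[ℝ] En n} {T : ℝ → En n →L[ℝ] En n} {t : ℝ}
    (hB : HasDerivAt B (-(Nc n G c t ∘L B t)) t) (hBt : (B t).IsInvertible)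
    (hT : DifferentiableAt ℝ T t) :
    HasDerivAt (fun s => (B s).inverse ∘L T s ∘L B s)
      ((B t).inverse ∘L covE n G c T t ∘L B t) t := by
  refine ((hB.inverse_clm hBt).clm_comp (hT.hasDerivAt.clm_comp hB)).congr_deriv ?_
  ext x
  simp only [covE, comp_add, comp_sub, add_comp, sub_comp, neg_comp, comp_neg, neg_neg,
    add_apply, sub_apply, neg_apply, comp_apply, hBt.self_apply_inverse]
  abel

end Covariant

section Jacobi

variable {n m : ℕ} {G : En n × En n → En n} {c : ℝ → En n} {I : Set ℝ}
  {e : Fin m → ℝ → En n} {J : ℝ → En n →L[ℝ] En n} {t₀ : ℝ}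

theorem mem_Wspan_of_covE_mem_Wspan (hG : IsSpray n G) (hc : IsGeodesicOn n G c I)
    (hI : IsOpen I) (hI' : IsPreconnected I) (he : IsParallelFrame n m G c I e)
    {T : ℝ → En n →L[ℝ] En n} (hT : DifferentiableOn ℝ T I)
    (hcov : ∀ t ∈ I, ∀ x, covE n G c T t x ∈ Wspan n m e t) (ht₀ : t₀ ∈ I)
    (hT₀ : ∀ x, T t₀ x ∈ Wspan n m e t₀) : ∀ t ∈ I, ∀ x, T t x ∈ Wspan n m e t := by
  have hrow : ∀ y, ∀ s ∈ I,
      HasDerivAt (fun s => (frameMap c e s).inverse (T s (frameMap c e s y)) none) 0 s := by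
    intro y s hs
    obtain ⟨hli, hsp⟩ := he.2 s hs
    have hK := hasDerivAt_inverse_comp_comp (he.hasDerivAt_frameMap hG hc hI hs)
      (isInvertible_frameMap hli hsp) (hT.differentiableAt (hI.mem_nhds hs))
    refine (hasDerivAt_pi.1 (hK.clm_apply (hasDerivAt_const s y)) none).congr_deriv ?_
    simp [(mem_Wspan_iff hli hsp).1 (hcov s hs _)]
  intro t ht x
  obtain ⟨hli, hsp⟩ := he.2 t ht
  rw [mem_Wspan_iff hli hsp, ← (isInvertible_frameMap hli hsp).self_apply_inverse x,
    hI.is_const_of_deriv_eq_zero hI'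
      (fun s hs => (hrow _ s hs).differentiableAt.differentiableWithinAt)
      (fun s hs => (hrow _ s hs).deriv) ht ht₀]
  obtain ⟨hli₀, hsp₀⟩ := he.2 t₀ ht₀
  exact (mem_Wspan_iff hli₀ hsp₀).1 (hT₀ _)

theorem IsJacobiTensor.covE_covE (hJ : IsJacobiTensor n G c I J) {t : ℝ} (ht : t ∈ I) :
    covE n G c (covE n G c J) t = -(Phi n G c t ∘L J t) :=
  eq_neg_of_add_eq_zero_left (hJ.2 t ht)

theorem IsJacobiTensor.apply_deriv_eq_zero (hG : IsSpray n G) (hc : IsGeodesicOn n G c I)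
    (hI : IsOpen I) (hI' : I.OrdConnected) (hJ : IsJacobiTensor n G c I J) (ht₀ : t₀ ∈ I)
    (hJ₀ : J t₀ (deriv c t₀) = 0) (hdJ₀ : covE n G c J t₀ (deriv c t₀) = 0) :
    ∀ t ∈ I, J t (deriv c t) = 0 := by
  have hN := hc.contDiffOn_Nc hG.1 hI
  have hv := fun t (ht : t ∈ I) => (hc.isParallel_deriv hG hI).hasDerivAt hI ht
  have hJd : DifferentiableOn ℝ J I := hJ.1.differentiableOn (by simp)
  have hdJd : DifferentiableOn ℝ (covE n G c J) I :=
    (contDiffOn_covE hN hJ.1 hI).differentiableOn (by simp)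
  refine hI'.eq_zero_of_hasDerivAt_jacobi_system hN.continuousOn
    (hc.continuousOn_Phi hG.1 hI)
    (fun t ht => hasDerivAt_apply_of_parallel (hJd.differentiableAt (hI.mem_nhds ht)) (hv t ht))
    (fun t ht => ?_) ht₀ hJ₀ hdJ₀
  refine (hasDerivAt_apply_of_parallel (hdJd.differentiableAt (hI.mem_nhds ht))
    (hv t ht)).congr_deriv ?_
  simp [hJ.covE_covE ht]

theorem IsJacobiTensor.mem_Wspan (hG : IsSpray n G) (hc : IsGeodesicOn n G c I)
    (hI : IsOpen I) (hI' : I.OrdConnected) (he : IsParallelFrame n m G c I e)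
    (hJ : IsJacobiTensor n G c I J) (hΦ : ∀ t ∈ I, ∀ x, Phi n G c t x ∈ Wspan n m e t)
    (ht₀ : t₀ ∈ I) (hJ₀ : ∀ x, J t₀ x ∈ Wspan n m e t₀)
    (hdJ₀ : ∀ x, covE n G c J t₀ x ∈ Wspan n m e t₀) :
    ∀ t ∈ I, ∀ x, J t x ∈ Wspan n m e t := by
  have hdJ := mem_Wspan_of_covE_mem_Wspan hG hc hI hI'.isPreconnected he
    ((contDiffOn_covE (hc.contDiffOn_Nc hG.1 hI) hJ.1 hI).differentiableOn (by simp))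
    (fun t ht x => by simpa [hJ.covE_covE ht] using hΦ t ht (J t x)) ht₀ hdJ₀
  exact mem_Wspan_of_covE_mem_Wspan hG hc hI hI'.isPreconnected he
    (hJ.1.differentiableOn (by simp)) hdJ ht₀ hJ₀

end Jacobi

theorem jacobi_tensor_transversal_general (n : ℕ)
    (G : En n × En n → En n) (hG : IsSpray n G)
    (I : Set ℝ) (hIopen : IsOpen I) (hIconn : I.OrdConnected) (h0 : (0 : ℝ) ∈ I)
    (c : ℝ → En n) (hc : IsGeodesicOn n G c I)
    (e : Fin (n - 1) → ℝ → En n) (he : IsParallelFrame n (n - 1) G c I e)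
    (J : ℝ → En n →L[ℝ] En n) (hJ : IsJacobiTensor n G c I J)
    (hPhi : ∀ t ∈ I, Phi n G c t (deriv c t) = 0 ∧
      ∀ x, Phi n G c t x ∈ Wspan n (n - 1) e t)
    (hJ0 : J 0 (deriv c 0) = 0)
    (hdJ0 : covE n G c J 0 (deriv c 0) = 0)
    (hJr : ∀ x, J 0 x ∈ Wspan n (n - 1) e 0)
    (hdJr : ∀ x, covE n G c J 0 x ∈ Wspan n (n - 1) e 0) :
    ∀ t ∈ I, J t (deriv c t) = 0 ∧ ∀ x, J t x ∈ Wspan n (n - 1) e t := fun t ht =>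
  ⟨hJ.apply_deriv_eq_zero hG hc hIopen hIconn h0 hJ0 hdJ0 t ht,
    hJ.mem_Wspan hG hc hIopen hIconn he (fun s hs => (hPhi s hs).2) h0 hJr hdJr t ht⟩

/-- If the Jacobi endomorphism is transversal with respect to the parallel distribution
`W_t` and a Jacobi tensor `J` has transversal initial data at `t = 0`, then `J` is
transversal with respect to `W_t` on all of `I`. -/
theorem jacobi_tensor_transversal (n : ℕ) (hn : 2 ≤ n)
    (G : En n × En n → En n) (hG : IsSpray n G)
    (I : Set ℝ) (hIopen : IsOpen I) (hIconn : I.OrdConnected) (h0 : (0 : ℝ) ∈ I)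
    (c : ℝ → En n) (hc : IsGeodesicOn n G c I)
    (e : Fin (n - 1) → ℝ → En n) (he : IsParallelFrame n (n - 1) G c I e)
    (J : ℝ → En n →L[ℝ] En n) (hJ : IsJacobiTensor n G c I J)
    (hPhi : ∀ t ∈ I, Phi n G c t (deriv c t) = 0 ∧
      ∀ x, Phi n G c t x ∈ Wspan n (n - 1) e t)
    (hJ0 : J 0 (deriv c 0) = 0)
    (hdJ0 : covE n G c J 0 (deriv c 0) = 0)
    (hJr : ∀ x, J 0 x ∈ Wspan n (n - 1) e 0)
    (hdJr : ∀ x, covE n G c J 0 x ∈ Wspan n (n - 1) e 0) :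
    ∀ t ∈ I, J t (deriv c t) = 0 ∧ ∀ x, J t x ∈ Wspan n (n - 1) e t :=
  jacobi_tensor_transversal_general n G hG I hIopen hIconn h0 c hc e he J hJ hPhi hJ0 hdJ0 hJr hdJr
end
end

section
/- Let G be a semispray on ℝⁿ, let c : I → ℝⁿ be a geodesic of G, and let J : I → End(ℝⁿ) be a Jacobi tensor along c such that J(t) is an invertible linear map for every t ∈ I. Then the endomorphism field L(t) = (∇J)(t) ∘ J(t)⁻¹ satisfies the tensor Riccati equation along c: ∇L + L∘L + Φ = 0 on I. -/
noncomputable section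

/-! The dynamical covariant derivative `∇` obeys the Leibniz rule on products of endomorphism
fields, so differentiating `J J⁻¹ = 1` gives `∇(J⁻¹) = -J⁻¹ (∇J) J⁻¹`. For `L = (∇J) J⁻¹` this
yields `∇L + L² = (∇²J) J⁻¹`, and the Jacobi equation `∇²J = -Φ J` turns the right side into
`-Φ`. The analytic input is only that `N`, `J`, `∇J` and `J⁻¹` are differentiable, the last
because `J⁻¹` is `Ring.inverse ∘ J` near each point. -/

open Filter Topology

theorem riccati_identity {A : Type*} [Ring A] {Φ J B K K' : A} (hJB : J * B = 1) :
    K' * B + K * -(B * K * B) + K * B * (K * B) + Φ = (K' + Φ * J) * B := by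
  rw [add_mul, mul_assoc Φ, hJB, mul_one]
  noncomm_ring

section NormedRing

variable {𝕜 R : Type*} [NontriviallyNormedField 𝕜] [NormedRing R] [HasSummableGeomSeries R]
  [NormedAlgebra 𝕜 R]

theorem HasDerivAt.of_eventually_inverse {a b : 𝕜 → R} {a' : R} {t : 𝕜} (ha : HasDerivAt a a' t)
    (hab : ∀ᶠ s in 𝓝 t, a s * b s = 1 ∧ b s * a s = 1) :
    HasDerivAt b (-(b t * a' * b t)) t := by
  let u : Rˣ := ⟨a t, b t, hab.self_of_nhds.1, hab.self_of_nhds.2⟩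
  have h := (hasFDerivAt_ringInverse (𝕜 := 𝕜) u).comp_hasDerivAt t ha
  simp only [neg_apply, ContinuousLinearMap.mulLeftRight_apply] at h
  refine h.congr_of_eventuallyEq ?_
  filter_upwards [hab] with s hs
  exact (Ring.inverse_unit ⟨a s, b s, hs.1, hs.2⟩).symm

end NormedRing

theorem DyG_eq_fderiv_comp_inr {n : ℕ} {G : En n × En n → En n} {x y : En n}
    (hG : DifferentiableAt ℝ G (x, y)) :
    DyG n G x y = (fderiv ℝ G (x, y)).comp (ContinuousLinearMap.inr ℝ (En n) (En n)) :=
  (hG.hasFDerivAt.comp y (hasFDerivAt_prodMk_right x y)).fderiv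

theorem differentiableAt_Nc {n : ℕ} {G : En n × En n → En n} {I : Set ℝ} {c : ℝ → En n}
    {t : ℝ} (hG : ContDiffOn ℝ 2 G {p | p.2 ≠ 0}) (hI : IsOpen I) (hc : ContDiffOn ℝ 2 c I)
    (hreg : ∀ s ∈ I, deriv c s ≠ 0) (ht : t ∈ I) :
    DifferentiableAt ℝ (Nc n G c) t := by
  have hU : IsOpen {p : En n × En n | p.2 ≠ 0} := isOpen_compl_singleton.preimage continuous_snd
  have hc' : ContDiffOn ℝ 1 (deriv c) I := ((contDiffOn_succ_iff_deriv_of_isOpen hI).1 hc).2.2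
  have hG' : ContDiffOn ℝ 1 (fderiv ℝ G) {p | p.2 ≠ 0} :=
    ((contDiffOn_succ_iff_fderiv_of_isOpen hU).1 hG).2.2
  have hcurve : DifferentiableAt ℝ (fun s => (c s, deriv c s)) t :=
    ((hc.differentiableOn (by norm_num)).differentiableAt (hI.mem_nhds ht)).prodMk
      ((hc'.differentiableOn one_ne_zero).differentiableAt (hI.mem_nhds ht))
  have hfG : DifferentiableAt ℝ (fderiv ℝ G) (c t, deriv c t) :=
    (hG'.differentiableOn one_ne_zero).differentiableAt (hU.mem_nhds (hreg t ht))
  refine ((hfG.comp t hcurve).clm_comp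
    (differentiableAt_const (ContinuousLinearMap.inr ℝ (En n) (En n)))).congr_of_eventuallyEq ?_
  filter_upwards [hI.mem_nhds ht] with s hs
  exact DyG_eq_fderiv_comp_inr
    ((hG.differentiableOn (by norm_num)).differentiableAt (hU.mem_nhds (hreg s hs)))

section CovariantDerivative

variable {n : ℕ} {G : En n × En n → En n} {c : ℝ → En n} {K B : ℝ → En n →L[ℝ] En n} {t : ℝ}

theorem differentiableAt_covE (hN : DifferentiableAt ℝ (Nc n G c) t)
    (hK : DifferentiableAt ℝ K t) (hK' : DifferentiableAt ℝ (deriv K) t) :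
    DifferentiableAt ℝ (covE n G c K) t :=
  (hK'.add (hN.clm_comp hK)).sub (hK.clm_comp hN)

theorem covE_mul (hK : DifferentiableAt ℝ K t) (hB : DifferentiableAt ℝ B t) :
    covE n G c (fun s => K s * B s) t = covE n G c K t * B t + K t * covE n G c B t := by
  simp only [covE, ← ContinuousLinearMap.mul_def]
  have hKB : HasDerivAt (fun s => K s * B s) (deriv K t * B t + K t * deriv B t) t :=
    hK.hasDerivAt.mul hB.hasDerivAt
  rw [hKB.deriv]
  simp only [mul_add, add_mul, mul_sub, sub_mul, mul_assoc]
  abel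

theorem covE_eq_of_hasDerivAt_inverse (hKB : K t * B t = 1) (hBK : B t * K t = 1)
    (hB : HasDerivAt B (-(B t * deriv K t * B t)) t) :
    covE n G c B t = -(B t * covE n G c K t * B t) := by
  simp only [covE, ← ContinuousLinearMap.mul_def, hB.deriv]
  set N := Nc n G c t
  calc -(B t * deriv K t * B t) + N * B t - B t * N
      = -(B t * deriv K t * B t) + (B t * K t) * N * B t - B t * N * (K t * B t) := by
        rw [hKB, hBK, one_mul, mul_one]
    _ = -(B t * (deriv K t + N * K t - K t * N) * B t) := by
        simp only [mul_add, add_mul, mul_sub, sub_mul, mul_assoc]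
        abel

end CovariantDerivative

theorem invertible_jacobi_tensor_riccati_general (n : ℕ)
    (G : En n × En n → En n) (hG : IsSemispray n G)
    (I : Set ℝ) (hIopen : IsOpen I)
    (c : ℝ → En n) (hc : IsGeodesicOn n G c I)
    (J : ℝ → En n →L[ℝ] En n) (hJ : IsJacobiTensor n G c I J)
    (Jinv : ℝ → En n →L[ℝ] En n)
    (hinv : ∀ t ∈ I, (J t).comp (Jinv t) = ContinuousLinearMap.id ℝ (En n) ∧
      (Jinv t).comp (J t) = ContinuousLinearMap.id ℝ (En n))
    (L : ℝ → En n →L[ℝ] En n)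
    (hL : ∀ t, L t = (covE n G c J t).comp (Jinv t)) :
    ∀ t ∈ I, covE n G c L t + (L t).comp (L t) + Phi n G c t = 0 := by
  intro t ht
  have htwo : (2 : WithTop ℕ∞) ≤ (⊤ : ℕ∞) := WithTop.coe_le_coe.2 le_top
  have hJ' : ContDiffOn ℝ 1 (deriv J) I :=
    ((contDiffOn_succ_iff_deriv_of_isOpen hIopen).1 (hJ.1.of_le htwo)).2.2
  have hJd : DifferentiableAt ℝ J t :=
    (hJ.1.differentiableOn (by simp)).differentiableAt (hIopen.mem_nhds ht)
  have hK : DifferentiableAt ℝ (covE n G c J) t :=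
    differentiableAt_covE (differentiableAt_Nc (hG.of_le htwo) hIopen (hc.1.of_le htwo) hc.2.1 ht)
      hJd ((hJ'.differentiableOn one_ne_zero).differentiableAt (hIopen.mem_nhds ht))
  have hinvt : ∀ s ∈ I, J s * Jinv s = 1 ∧ Jinv s * J s = 1 := hinv
  have hB := hJd.hasDerivAt.of_eventually_inverse
    (eventually_of_mem (hIopen.mem_nhds ht) hinvt)
  have hLeq : L = fun s => covE n G c J s * Jinv s := funext hL
  have hJac : covE n G c (covE n G c J) t + Phi n G c t * J t = 0 := hJ.2 t ht
  rw [hLeq, covE_mul hK hB.differentiableAt,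
    covE_eq_of_hasDerivAt_inverse (hinvt t ht).1 (hinvt t ht).2 hB]
  exact (riccati_identity (hinvt t ht).1).trans (by rw [hJac, zero_mul])

/-- If `J` is an invertible Jacobi tensor along a geodesic, then `L = ∇J ∘ J⁻¹` satisfies
the tensor Riccati equation `∇L + L∘L + Φ = 0`. -/
theorem invertible_jacobi_tensor_riccati (n : ℕ) (hn : 1 ≤ n)
    (G : En n × En n → En n) (hG : IsSemispray n G)
    (I : Set ℝ) (hIopen : IsOpen I) (hIconn : I.OrdConnected)
    (c : ℝ → En n) (hc : IsGeodesicOn n G c I)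
    (J : ℝ → En n →L[ℝ] En n) (hJ : IsJacobiTensor n G c I J)
    (Jinv : ℝ → En n →L[ℝ] En n)
    (hinv : ∀ t ∈ I, (J t).comp (Jinv t) = ContinuousLinearMap.id ℝ (En n) ∧
      (Jinv t).comp (J t) = ContinuousLinearMap.id ℝ (En n))
    (L : ℝ → En n →L[ℝ] En n)
    (hL : ∀ t, L t = (covE n G c J t).comp (Jinv t)) :
    ∀ t ∈ I, covE n G c L t + (L t).comp (L t) + Phi n G c t = 0 :=
  invertible_jacobi_tensor_riccati_general n G hG I hIopen c hc J hJ Jinv hinv L hL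
end
end
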